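/- For a bond b in B(n−⌈√n⌉) ⊂ Z^d, the event G_n(b) ∩ G(b)^c implies the event D(b, ⌈√n⌉): there exist two disjoint open paths from the two endpoints of b reaching the boundary of the box v_1(b) + B(⌈√n⌉ − 1). -/

import Mathlib

open MeasureTheory ENNReal Filter


/-- The open subgraph of the Z^d lattice determined by a configuration
`ω : Sym2 (Fin d → ℤ) → Bool` (`true` = open): `x ~ y` iff they are at ℓ¹-distance 1
and the bond between them is open. -/
def openLattice (d : ℕ) (ω : Sym2 (Fin d → ℤ) → Bool) : SimpleGraph (Fin d → ℤ) :=
  SimpleGraph.fromRel (fun x y => (∑ i, |x i - y i|) = 1 ∧ ω s(x, y) = true)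

/-- The open subgraph of the lattice using only bonds with both endpoints in the box
B(n) = [-n,n]^d. -/
def openLatticeBox (d n : ℕ) (ω : Sym2 (Fin d → ℤ) → Bool) : SimpleGraph (Fin d → ℤ) :=
  SimpleGraph.fromRel (fun x y => (∑ i, |x i - y i|) = 1 ∧ ω s(x, y) = true
    ∧ (∀ i, |x i| ≤ (n : ℤ)) ∧ (∀ i, |y i| ≤ (n : ℤ)))

/-- G_n(b) for the bond b = {u,v}: the event that u and v are not joined by an open path
avoiding b inside B(n). -/
def GboxEvent (d n : ℕ) (u v : Fin d → ℤ) : Set (Sym2 (Fin d → ℤ) → Bool) :=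
  {ω | ¬ (openLatticeBox d n (Function.update ω s(u, v) false)).Reachable u v}

/-- G(b) for the bond b = {u,v}: the event that u and v are not joined by an open path
avoiding b in all of Z^d. -/
def GfullEvent (d : ℕ) (u v : Fin d → ℤ) : Set (Sym2 (Fin d → ℤ) → Bool) :=
  {ω | ¬ (openLattice d (Function.update ω s(u, v) false)).Reachable u v}

/-!
Since `G(b)` fails, some open path `p` joins `u` to `v` avoiding `b`; since `G_n(b)` holds, `p`
leaves `B(n)`, so it visits a vertex `z` at ℓ∞-distance more than `⌈√n⌉` from `u`. The ℓ∞-distance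
to `u` changes by at most one along an edge, so walking along `p` from `u` towards `z`, and from `v`
back towards `z`, each walk meets the sphere of radius `⌈√n⌉ - 1` about `u` before reaching `z`.
The two pieces lie on opposite sides of `z` in the self-avoiding path `p`, hence are disjoint.
-/

namespace SimpleGraph.Walk

variable {V : Type*} {G : SimpleGraph V}

theorem exists_prefix_reaching_level {f : V → ℕ} (hf : ∀ x y, G.Adj x y → f y ≤ f x + 1)
    {u w : V} (p : G.Walk u w) {r : ℕ} (hu : f u ≤ r) (hw : r ≤ f w) :
    ∃ x, f x = r ∧ ∃ q : G.Walk u x, q.support ⊆ p.support ∧ ∀ y ∈ q.support, f y ≤ r := by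
  induction p with
  | nil => exact ⟨_, le_antisymm hu hw, nil, List.Subset.refl _, by simpa using hu⟩
  | @cons u u' w hadj p ih =>
    rcases hu.eq_or_lt with hur | hu_lt
    · exact ⟨u, hur, nil, by simp, by simpa using hu⟩
    obtain ⟨x, hx, q, hqp, hqr⟩ := ih (by linarith [hf _ _ hadj]) hw
    refine ⟨x, hx, cons hadj q, ?_, ?_⟩
    · simpa using List.cons_subset_cons u hqp
    · simpa [hu] using hqr

theorem IsPath.exists_disjoint_paths_to_level {u v z : V} {p : G.Walk u v} (hp : p.IsPath)
    {f : V → ℕ} (hf : ∀ x y, G.Adj x y → f y ≤ f x + 1) (hz : z ∈ p.support) {r : ℕ}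
    (hu : f u ≤ r) (hv : f v ≤ r) (hr : r < f z) :
    ∃ (x y : V) (q₁ : G.Walk u x) (q₂ : G.Walk v y), q₁.IsPath ∧ q₂.IsPath ∧
      q₁.support.Disjoint q₂.support ∧ f x = r ∧ f y = r := by
  classical
  obtain ⟨p₁, p₂, -, -, rfl⟩ := hp.mem_support_iff_exists_append.mp hz
  obtain ⟨x, hx, q₁, hq₁p, hq₁r⟩ := exists_prefix_reaching_level hf p₁ hu hr.le
  obtain ⟨y, hy, q₂, hq₂p, -⟩ := exists_prefix_reaching_level hf p₂.reverse hv hr.le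
  refine ⟨x, y, q₁.bypass, q₂.bypass, bypass_isPath _, bypass_isPath _, ?_, hx, hy⟩
  intro a ha₁ ha₂
  have ha₁ := support_bypass_subset_support _ ha₁
  have haz : a ≠ z := by rintro rfl; exact absurd (hq₁r _ ha₁) hr.not_ge
  have ha₂ : a ∈ p₂.support := by simpa using hq₂p (support_bypass_subset_support _ ha₂)
  exact hp.ne_of_mem_support_of_append haz (hq₁p ha₁) ha₂ rfl

end SimpleGraph.Walk

section Lattice

variable {d : ℕ}

def linftyDist (x y : Fin d → ℤ) : ℕ := Finset.univ.sup fun i => (x i - y i).natAbs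

theorem linftyDist_le_iff {x y : Fin d → ℤ} {r : ℕ} :
    linftyDist x y ≤ r ↔ ∀ i, |x i - y i| ≤ r := by
  simp [linftyDist, Finset.sup_le_iff, ← Int.ofNat_le]

theorem abs_sub_le_linftyDist (x y : Fin d → ℤ) (i : Fin d) : |x i - y i| ≤ linftyDist x y :=
  linftyDist_le_iff.mp le_rfl i

@[simp]
theorem linftyDist_self (x : Fin d → ℤ) : linftyDist x x = 0 := by
  simp [linftyDist]

theorem linftyDist_eq_iff {x y : Fin d → ℤ} {r : ℕ} (hr : 0 < r) :
    linftyDist x y = r ↔ (∀ i, |x i - y i| ≤ r) ∧ ∃ i, |x i - y i| = r := by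
  have hge : r ≤ linftyDist x y ↔ ∃ i, r ≤ |x i - y i| := by
    simp [linftyDist, Finset.le_sup_iff (bot_lt_iff_ne_bot.mpr hr.ne'), ← Int.ofNat_le]
  rw [le_antisymm_iff, linftyDist_le_iff, hge]
  constructor
  · rintro ⟨hle, i, hi⟩
    exact ⟨hle, i, le_antisymm (hle i) hi⟩
  · rintro ⟨hle, i, hi⟩
    exact ⟨hle, i, hi.ge⟩

theorem abs_sub_le_one_of_sum_abs_sub_eq_one {x y : Fin d → ℤ} (h : ∑ j, |x j - y j| = 1)
    (i : Fin d) : |x i - y i| ≤ 1 :=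
  h ▸ Finset.single_le_sum (f := fun j => |x j - y j|) (fun _ _ => abs_nonneg _)
    (Finset.mem_univ i)

theorem sum_abs_sub_comm (x y : Fin d → ℤ) : ∑ i, |x i - y i| = ∑ i, |y i - x i| := by
  simp only [abs_sub_comm]

theorem openLattice_adj {ω : Sym2 (Fin d → ℤ) → Bool} {x y : Fin d → ℤ} :
    (openLattice d ω).Adj x y ↔ (∑ i, |x i - y i|) = 1 ∧ ω s(x, y) = true := by
  rw [openLattice, SimpleGraph.fromRel_adj, sum_abs_sub_comm y, Sym2.eq_swap, or_self,
    and_iff_right_iff_imp]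
  rintro ⟨hsum, -⟩ rfl
  simp at hsum

theorem openLatticeBox_adj {n : ℕ} {ω : Sym2 (Fin d → ℤ) → Bool} {x y : Fin d → ℤ} :
    (openLatticeBox d n ω).Adj x y ↔
      (openLattice d ω).Adj x y ∧ (∀ i, |x i| ≤ (n : ℤ)) ∧ ∀ i, |y i| ≤ (n : ℤ) := by
  rw [openLattice_adj, openLatticeBox, SimpleGraph.fromRel_adj, sum_abs_sub_comm y, Sym2.eq_swap]
  constructor
  · rintro ⟨-, h | h⟩ <;> tauto
  · rintro ⟨⟨hsum, hω⟩, hx, hy⟩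
    exact ⟨by rintro rfl; simp at hsum, .inl ⟨hsum, hω, hx, hy⟩⟩

theorem openLattice_update_false_le (ω : Sym2 (Fin d → ℤ) → Bool) (b : Sym2 (Fin d → ℤ)) :
    openLattice d (Function.update ω b false) ≤ openLattice d ω := by
  intro x y
  simp only [openLattice_adj, Function.update_apply]
  split_ifs <;> simp_all

theorem linftyDist_le_add_one_of_adj {ω : Sym2 (Fin d → ℤ) → Bool} {x y : Fin d → ℤ}
    (h : (openLattice d ω).Adj x y) (u : Fin d → ℤ) :
    linftyDist y u ≤ linftyDist x u + 1 := by
  rw [linftyDist_le_iff]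
  intro i
  have hxy := abs_sub_le_one_of_sum_abs_sub_eq_one (openLattice_adj.mp h).1 i
  calc |y i - u i| ≤ |x i - y i| + |x i - u i| := by
        rw [abs_sub_comm (x i)]; exact abs_sub_le _ _ _
    _ ≤ 1 + linftyDist x u := by gcongr; exact abs_sub_le_linftyDist x u i
    _ = _ := by push_cast; ring

theorem reachable_openLatticeBox_of_walk {n : ℕ} {ω : Sym2 (Fin d → ℤ) → Bool}
    {x y : Fin d → ℤ} (p : (openLattice d ω).Walk x y)
    (hp : ∀ z ∈ p.support, ∀ i, |z i| ≤ (n : ℤ)) : (openLatticeBox d n ω).Reachable x y := by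
  induction p with
  | nil => rfl
  | cons hadj p ih =>
    simp only [SimpleGraph.Walk.support_cons, List.mem_cons, forall_eq_or_imp] at hp
    exact (openLatticeBox_adj.mpr ⟨hadj, hp.1, hp.2 _ p.start_mem_support⟩).reachable.trans
      (ih hp.2)

end Lattice

theorem two_le_ceil_sqrt_of_ceil_sqrt_lt {n : ℕ} (h : ⌈Real.sqrt n⌉₊ < n) :
    2 ≤ ⌈Real.sqrt n⌉₊ := by
  match n, h with
  | 0, h => simp at h
  | 1, h => simp at h
  | n + 2, _ =>
    show 1 < _
    rw [Nat.lt_ceil, Nat.cast_one, Real.lt_sqrt zero_le_one]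
    push_cast
    linarith [(n.cast_nonneg : (0 : ℝ) ≤ n)]

theorem stmt_17_general {d n : ℕ} (ω : Sym2 (Fin d → ℤ) → Bool)
    (u v : Fin d → ℤ) (hbond : (∑ i, |u i - v i|) = 1)
    (hu : ∀ i, |u i| ≤ (n : ℤ) - (⌈Real.sqrt n⌉₊ : ℤ))
    (hv : ∀ i, |v i| ≤ (n : ℤ) - (⌈Real.sqrt n⌉₊ : ℤ))
    (hGn : ω ∈ GboxEvent d n u v) (hG : ω ∉ GfullEvent d u v) :
    ∃ (x y : Fin d → ℤ) (w₁ : (openLattice d ω).Walk u x) (w₂ : (openLattice d ω).Walk v y),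
      w₁.IsPath ∧ w₂.IsPath ∧
      w₁.support.Disjoint w₂.support ∧
      ((∀ i, |x i - u i| ≤ (⌈Real.sqrt n⌉₊ : ℤ) - 1) ∧ ∃ i, |x i - u i| = (⌈Real.sqrt n⌉₊ : ℤ) - 1) ∧
      ((∀ i, |y i - u i| ≤ (⌈Real.sqrt n⌉₊ : ℤ) - 1) ∧ ∃ i, |y i - u i| = (⌈Real.sqrt n⌉₊ : ℤ) - 1) := by
  set m := ⌈Real.sqrt n⌉₊
  have hm : 2 ≤ m := by
    -- a bond has an endpoint off the origin, so the hypotheses force `⌈√n⌉ < n`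
    refine two_le_ceil_sqrt_of_ceil_sqrt_lt ?_
    obtain ⟨i, -, hi⟩ := Finset.exists_ne_zero_of_sum_ne_zero (hbond ▸ one_ne_zero)
    have := abs_sub (u i) (v i)
    have := abs_nonneg (u i - v i)
    have := hu i
    have := hv i
    omega
  obtain ⟨w⟩ : (openLattice d (Function.update ω s(u, v) false)).Reachable u v := not_not.mp hG
  obtain ⟨z, hz, i, hzi⟩ : ∃ z ∈ w.bypass.support, ∃ i, (n : ℤ) < |z i| := by
    by_contra! h
    exact hGn (reachable_openLatticeBox_of_walk _ h)
  have hfar : m - 1 < linftyDist z u := by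
    have := abs_sub_le_linftyDist z u i
    have := abs_sub_abs_le_abs_sub (z i) (u i)
    have := hu i
    omega
  have hnear : linftyDist v u ≤ m - 1 := linftyDist_le_iff.mpr fun j => by
    have := abs_sub_le_one_of_sum_abs_sub_eq_one hbond j
    rw [abs_sub_comm] at this
    omega
  obtain ⟨x, y, q₁, q₂, hq₁, hq₂, hdisj, hx, hy⟩ :=
    (w.bypass_isPath.mapLe (openLattice_update_false_le ω _)).exists_disjoint_paths_to_level
      (fun _ _ h => linftyDist_le_add_one_of_adj h u) (by simpa using hz)
      (by simp) hnear hfar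
  rw [linftyDist_eq_iff (by omega)] at hx hy
  have hcast : ((m - 1 : ℕ) : ℤ) = m - 1 := by omega
  exact ⟨x, y, q₁, q₂, hq₁, hq₂, hdisj, by simpa only [hcast] using hx,
    by simpa only [hcast] using hy⟩

/-- For a bond b = {u,v} with endpoints in B(n − ⌈√n⌉), the event G_n(b) ∩ G(b)ᶜ implies
the event D(b, ⌈√n⌉): there are two vertex-disjoint open paths from u and from v, each
reaching the boundary of the box u + B(⌈√n⌉ − 1). -/
theorem stmt_17 {d n : ℕ} (hn : 1 ≤ n) (ω : Sym2 (Fin d → ℤ) → Bool)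
    (u v : Fin d → ℤ) (hbond : (∑ i, |u i - v i|) = 1)
    (hu : ∀ i, |u i| ≤ (n : ℤ) - (⌈Real.sqrt n⌉₊ : ℤ))
    (hv : ∀ i, |v i| ≤ (n : ℤ) - (⌈Real.sqrt n⌉₊ : ℤ))
    (hGn : ω ∈ GboxEvent d n u v) (hG : ω ∉ GfullEvent d u v) :
    ∃ (x y : Fin d → ℤ) (w₁ : (openLattice d ω).Walk u x) (w₂ : (openLattice d ω).Walk v y),
      w₁.IsPath ∧ w₂.IsPath ∧
      w₁.support.Disjoint w₂.support ∧
      ((∀ i, |x i - u i| ≤ (⌈Real.sqrt n⌉₊ : ℤ) - 1) ∧ ∃ i, |x i - u i| = (⌈Real.sqrt n⌉₊ : ℤ) - 1) ∧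
      ((∀ i, |y i - u i| ≤ (⌈Real.sqrt n⌉₊ : ℤ) - 1) ∧ ∃ i, |y i - u i| = (⌈Real.sqrt n⌉₊ : ℤ) - 1) :=
  stmt_17_general ω u v hbond hu hv hGn hG
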